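/- Let (Z_i)_{i≥1} be identically distributed nonnegative random variables (no independence assumed) with E[Z₁^s] < ∞ for some 0 < s ≤ 1, and let 0 < r < 1. Then for every integer M ≥ 0 and every x > 0, P( Σ_{i=M+1}^∞ r^i Z_i > x ) ≤ E[Z₁^s] · x^{−s} · (1 − r^{1/2})^{−s} · (1 − r^{s/2})^{−1} · r^{M s/2}. -/

import Mathlib

open MeasureTheory ProbabilityTheory
open scoped ENNReal

/-!
Split the level `x` as `x = ∑ᵢ x (1 - √r) (√r)^i`. If the weighted tail sum exceeds `x`, some
term `r^(M+1+i) Z_(M+1+i)` exceeds its share, so a union bound and Markov's inequality for the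
`s`-th moment give `∑ᵢ E[Z₁^s] (x (1 - √r))^(-s) (r^(M+1+i) / (√r)^i)^s`, a geometric series with
ratio `r^(s/2)` whose sum is the claimed bound (with the better factor `r^((M+1)s)`).
-/

theorem setOf_tsum_lt_tsum_subset_iUnion {α ι : Type*} (c : ι → ℝ≥0∞) (f : ι → α → ℝ≥0∞) :
    {a | ∑' i, c i < ∑' i, f i a} ⊆ ⋃ i, {a | c i < f i a} := by
  intro a ha
  by_contra h
  simp only [Set.mem_iUnion, Set.mem_ofPred_eq, not_exists, not_lt] at h
  exact (ENNReal.tsum_le_tsum h).not_gt ha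

theorem tsum_ofReal_mul_geometric {C q : ℝ} (hC : 0 ≤ C) (hq0 : 0 ≤ q) (hq1 : q < 1) :
    ∑' i : ℕ, ENNReal.ofReal (C * q ^ i) = ENNReal.ofReal (C * (1 - q)⁻¹) := by
  rw [← ENNReal.ofReal_tsum_of_nonneg (fun i => by positivity)
    ((summable_geometric_of_lt_one hq0 hq1).mul_left C), tsum_mul_left,
    tsum_geometric_of_lt_one hq0 hq1]

theorem rpow_neg_geometric_threshold {ρ a : ℝ} (hρ : 0 < ρ) (ha : 0 < a) (s : ℝ) (n i : ℕ) :
    (a * ρ ^ i / (ρ ^ 2) ^ (n + i)) ^ (-s) = a ^ (-s) * (ρ ^ s) ^ (2 * n) * (ρ ^ s) ^ i := by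
  have hsplit : a * ρ ^ i / (ρ ^ 2) ^ (n + i) = a / ρ ^ (2 * n + i) := by
    field_simp
    ring
  rw [hsplit, Real.div_rpow ha.le (by positivity), Real.rpow_neg (pow_nonneg hρ.le _),
    div_inv_eq_mul, ← Real.rpow_natCast_mul hρ.le, mul_comm _ s, Real.rpow_mul_natCast hρ.le,
    pow_add, mul_assoc]

theorem Real.sq_rpow_div_two {ρ : ℝ} (hρ : 0 ≤ ρ) (t : ℝ) : (ρ ^ 2) ^ (t / 2) = ρ ^ t := by
  rw [← Real.rpow_natCast_mul hρ]
  congr 1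
  push_cast
  ring

section

variable {Ω : Type*} [MeasurableSpace Ω] {μ : Measure Ω}

theorem measure_lt_le_ofReal_rpow_neg_mul_lintegral {f : Ω → ℝ} (hf : AEMeasurable f μ)
    {s t : ℝ} (hs : 0 ≤ s) (ht : 0 < t) :
    μ {ω | t < f ω} ≤ ENNReal.ofReal (t ^ (-s)) * ∫⁻ ω, ENNReal.ofReal (f ω ^ s) ∂μ := by
  have hts : 0 < t ^ s := Real.rpow_pos_of_pos ht s
  calc μ {ω | t < f ω} ≤ μ {ω | ENNReal.ofReal (t ^ s) ≤ ENNReal.ofReal (f ω ^ s)} :=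
        measure_mono fun ω hω =>
          ENNReal.ofReal_le_ofReal (Real.rpow_le_rpow ht.le (le_of_lt hω) hs)
    _ ≤ (∫⁻ ω, ENNReal.ofReal (f ω ^ s) ∂μ) / ENNReal.ofReal (t ^ s) :=
        meas_ge_le_lintegral_div (by fun_prop) (by simpa using hts) ENNReal.ofReal_ne_top
    _ = _ := by
        rw [div_eq_mul_inv, mul_comm, Real.rpow_neg ht.le, ENNReal.ofReal_inv_of_pos hts]

theorem measure_ofReal_tsum_lt_tsum_le {ι : Type*} [Countable ι] {Y : ι → Ω → ℝ}
    (hY : ∀ i, AEMeasurable (Y i) μ) {s : ℝ} (hs : 0 ≤ s) {w c : ι → ℝ}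
    (hw : ∀ i, 0 < w i) (hc : ∀ i, 0 < c i) (hcs : Summable c) :
    μ {ω | ENNReal.ofReal (∑' i, c i) < ∑' i, ENNReal.ofReal (w i * Y i ω)} ≤
      ∑' i, ENNReal.ofReal ((c i / w i) ^ (-s)) * ∫⁻ ω, ENNReal.ofReal (Y i ω ^ s) ∂μ := by
  rw [ENNReal.ofReal_tsum_of_nonneg (fun i => (hc i).le) hcs]
  calc _ ≤ μ (⋃ i, {ω | c i / w i < Y i ω}) := by
        refine measure_mono ((setOf_tsum_lt_tsum_subset_iUnion _ _).trans
          (Set.iUnion_mono fun i ω hω => ?_))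
        rw [Set.mem_ofPred_eq, div_lt_iff₀' (hw i)]
        exact (ENNReal.ofReal_lt_ofReal_iff'.1 hω).1
    _ ≤ ∑' i, μ {ω | c i / w i < Y i ω} := measure_iUnion_le _
    _ ≤ _ := ENNReal.tsum_le_tsum fun i =>
        measure_lt_le_ofReal_rpow_neg_mul_lintegral (hY i) hs (div_pos (hc i) (hw i))

theorem measure_geometric_weighted_tsum_gt_le {Y : ℕ → Ω → ℝ} (hY : ∀ i, AEMeasurable (Y i) μ)
    {s : ℝ} (hs : 0 < s) {I : ℝ≥0∞} (hI : ∀ i, ∫⁻ ω, ENNReal.ofReal (Y i ω ^ s) ∂μ ≤ I)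
    {ρ : ℝ} (hρ0 : 0 < ρ) (hρ1 : ρ < 1) (n : ℕ) {x : ℝ} (hx : 0 < x) :
    μ {ω | ENNReal.ofReal x < ∑' i, ENNReal.ofReal ((ρ ^ 2) ^ (n + i) * Y i ω)} ≤
      ENNReal.ofReal ((x * (1 - ρ)) ^ (-s) * (ρ ^ s) ^ (2 * n) * (1 - ρ ^ s)⁻¹) * I := by
  have hxρ : 0 < x * (1 - ρ) := mul_pos hx (by linarith)
  have hsum : ∑' i, x * (1 - ρ) * ρ ^ i = x := by
    rw [tsum_mul_left, tsum_geometric_of_lt_one hρ0.le hρ1]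
    field_simp [(by linarith : 1 - ρ ≠ 0)]
  have hsplit := measure_ofReal_tsum_lt_tsum_le hY hs.le (w := fun i => (ρ ^ 2) ^ (n + i))
    (fun i => by positivity) (fun i => mul_pos hxρ (pow_pos hρ0 i))
    ((summable_geometric_of_lt_one hρ0.le hρ1).mul_left (x * (1 - ρ)))
  rw [hsum] at hsplit
  refine hsplit.trans ?_
  simp_rw [rpow_neg_geometric_threshold hρ0 hxρ]
  calc _ ≤ ∑' i, ENNReal.ofReal ((x * (1 - ρ)) ^ (-s) * (ρ ^ s) ^ (2 * n) * (ρ ^ s) ^ i) * I :=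
        ENNReal.tsum_le_tsum fun i => by gcongr; exact hI i
    _ = _ := by
        rw [ENNReal.tsum_mul_right, tsum_ofReal_mul_geometric (by positivity)
          (Real.rpow_nonneg hρ0.le s) (Real.rpow_lt_one hρ0.le hρ1 hs)]

theorem ProbabilityTheory.IdentDistrib.lintegral_ofReal_rpow_eq_ofReal_integral {X Y : Ω → ℝ}
    (h : IdentDistrib X Y μ μ) (hY : ∀ ω, 0 ≤ Y ω) {s : ℝ}
    (hYs : Integrable (fun ω => Y ω ^ s) μ) :
    ∫⁻ ω, ENNReal.ofReal (X ω ^ s) ∂μ = ENNReal.ofReal (∫ ω, Y ω ^ s ∂μ) := by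
  rw [ofReal_integral_eq_lintegral_ofReal hYs (ae_of_all _ fun ω => Real.rpow_nonneg (hY ω) s)]
  exact (h.comp (u := fun y => ENNReal.ofReal (y ^ s)) (by fun_prop)).lintegral_eq

end

theorem geometric_weighted_tail_bound_general
    {Ω : Type*} [MeasurableSpace Ω] (P : Measure Ω)
    (Z : ℕ → Ω → ℝ) (hmeas : ∀ i, Measurable (Z i)) (hpos : ∀ i ω, 0 ≤ Z i ω)
    (hident : ∀ i : ℕ, 1 ≤ i → Measure.map (Z i) P = Measure.map (Z 1) P)
    (s : ℝ) (hs0 : 0 < s)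
    (hmom : Integrable (fun ω => Z 1 ω ^ s) P)
    (r : ℝ) (hr0 : 0 < r) (hr1 : r < 1)
    (M : ℕ) (x : ℝ) (hx : 0 < x) :
    (P {ω | ENNReal.ofReal x <
        ∑' i : ℕ, ENNReal.ofReal (r ^ (M + 1 + i) * Z (M + 1 + i) ω)}).toReal ≤
      (∫ ω, Z 1 ω ^ s ∂P) * x ^ (-s) * (1 - r ^ ((1 : ℝ) / 2)) ^ (-s) *
        (1 - r ^ (s / 2))⁻¹ * r ^ ((M : ℝ) * s / 2) := by
  obtain ⟨ρ, hρ0, rfl⟩ : ∃ ρ, 0 < ρ ∧ r = ρ ^ 2 :=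
    ⟨√r, Real.sqrt_pos.2 hr0, (Real.sq_sqrt hr0.le).symm⟩
  have hρ1 : ρ < 1 := by nlinarith
  have hmoment (i : ℕ) : ∫⁻ ω, ENNReal.ofReal (Z (M + 1 + i) ω ^ s) ∂P =
      ENNReal.ofReal (∫ ω, Z 1 ω ^ s ∂P) :=
    IdentDistrib.lintegral_ofReal_rpow_eq_ofReal_integral
      ⟨(hmeas _).aemeasurable, (hmeas 1).aemeasurable, hident _ (by omega)⟩ (hpos 1) hmom
  have htail := measure_geometric_weighted_tsum_gt_le (fun i => (hmeas (M + 1 + i)).aemeasurable)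
    hs0 (fun i => (hmoment i).le) hρ0 hρ1 (M + 1) hx
  have hq : ρ ^ s ≤ 1 := Real.rpow_le_one hρ0.le hρ1.le hs0.le
  have hE : 0 ≤ ∫ ω, Z 1 ω ^ s ∂P := integral_nonneg fun ω => Real.rpow_nonneg (hpos 1 ω) s
  rw [Real.sq_rpow_div_two hρ0.le (M * s), Real.sq_rpow_div_two hρ0.le s,
    Real.sq_rpow_div_two hρ0.le 1, Real.rpow_one, mul_comm (M : ℝ), Real.rpow_mul_natCast hρ0.le]
  calc _ ≤ _ := ENNReal.toReal_mono (by finiteness) htail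
    _ = (∫ ω, Z 1 ω ^ s ∂P) * x ^ (-s) * (1 - ρ) ^ (-s) * (1 - ρ ^ s)⁻¹ *
          (ρ ^ s) ^ (2 * (M + 1)) := by
        have hA : 0 ≤ (x * (1 - ρ)) ^ (-s) * (ρ ^ s) ^ (2 * (M + 1)) * (1 - ρ ^ s)⁻¹ :=
          mul_nonneg (by positivity) (inv_nonneg.2 (sub_nonneg.2 hq))
        rw [ENNReal.toReal_mul, ENNReal.toReal_ofReal hA, ENNReal.toReal_ofReal hE,
          Real.mul_rpow hx.le (by linarith)]
        ring
    _ ≤ _ := by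
        gcongr _ * ?_
        exact pow_le_pow_of_le_one (Real.rpow_nonneg hρ0.le s) hq (by omega)

/-- The tail bound in the proof of Lemma 3.2: for identically distributed nonnegative `Z_i`
with `E[Z₁^s] < ∞` (`0 < s ≤ 1`) and `0 < r < 1`, for every `M ≥ 0` and `x > 0`,
`P(∑_{i=M+1}^∞ r^i Z_i > x) ≤ E[Z₁^s]·x^{-s}·(1-r^{1/2})^{-s}·(1-r^{s/2})^{-1}·r^{Ms/2}`. -/
theorem geometric_weighted_tail_bound
    {Ω : Type*} [MeasurableSpace Ω] (P : Measure Ω) [IsProbabilityMeasure P]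
    (Z : ℕ → Ω → ℝ) (hmeas : ∀ i, Measurable (Z i)) (hpos : ∀ i ω, 0 ≤ Z i ω)
    (hident : ∀ i : ℕ, 1 ≤ i → Measure.map (Z i) P = Measure.map (Z 1) P)
    (s : ℝ) (hs0 : 0 < s) (hs1 : s ≤ 1)
    (hmom : Integrable (fun ω => Z 1 ω ^ s) P)
    (r : ℝ) (hr0 : 0 < r) (hr1 : r < 1)
    (M : ℕ) (x : ℝ) (hx : 0 < x) :
    (P {ω | ENNReal.ofReal x <
        ∑' i : ℕ, ENNReal.ofReal (r ^ (M + 1 + i) * Z (M + 1 + i) ω)}).toReal ≤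
      (∫ ω, Z 1 ω ^ s ∂P) * x ^ (-s) * (1 - r ^ ((1 : ℝ) / 2)) ^ (-s) *
        (1 - r ^ (s / 2))⁻¹ * r ^ ((M : ℝ) * s / 2) :=
  geometric_weighted_tail_bound_general P Z hmeas hpos hident s hs0 hmom r hr0 hr1 M x hx
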